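/- Let l ≥ 4 be an integer, let G ∈ 𝒢_l, let C be an odd hole of G and let s, t be two nonadjacent vertices of C. Let P be an (s, t)-jump over C, and let Q1 and Q2 be the two internally disjoint (s, t)-paths of C. If P is a local jump or a short jump over C across Q1*, then |P| and |Q2| have the same parity; consequently P ∪ Q2 is an even hole and P ∪ Q1 is an odd cycle. -/

import Mathlib

open SimpleGraph

variable {V : Type*}

/-- The set of internal vertices of a walk from `x` to `y`. -/
def wInterior {G : SimpleGraph V} {x y : V} (P : G.Walk x y) : Set V :=
  {a | a ∈ P.support ∧ a ≠ x ∧ a ≠ y}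

/-- `P` is an induced path of `G`. -/
def IsInducedPath (G : SimpleGraph V) {x y : V} (P : G.Walk x y) : Prop :=
  P.IsPath ∧ ∀ a ∈ P.support, ∀ b ∈ P.support, G.Adj a b → s(a, b) ∈ P.edges

/-- A hole of `G`: an induced cycle of length at least 4. -/
def IsHole (G : SimpleGraph V) {v : V} (w : G.Walk v v) : Prop :=
  w.IsCycle ∧ 4 ≤ w.length ∧
    ∀ a ∈ w.support, ∀ b ∈ w.support, G.Adj a b → s(a, b) ∈ w.edges

/-- An odd hole of `G`. -/
def IsOddHole (G : SimpleGraph V) {v : V} (w : G.Walk v v) : Prop :=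
  IsHole G w ∧ Odd w.length

/-- `G` belongs to the family `𝒢ₗ`: it has girth `2l+1` and
no odd hole of length at least `2l+3`. -/
def MemGFam (G : SimpleGraph V) (l : ℕ) : Prop :=
  G.girth = (2 * l + 1 : ℕ) ∧
    ∀ (v : V) (w : G.Walk v v), IsOddHole G w → w.length < 2 * l + 3

/-- `G` is `k`-vertex-critical. -/
def IsVertexCritical (G : SimpleGraph V) (k : ℕ) : Prop :=
  G.chromaticNumber = k ∧
    ∀ v : V, (G.induce {u | u ≠ v}).chromaticNumber < k

/-- `S` is a vertex cut of `G`: deleting `S` leaves a disconnected graph. -/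
def IsVertexCut (G : SimpleGraph V) (S : Set V) : Prop :=
  ¬ (G.induce Sᶜ).Preconnected

/-- `G` has a `K2`-cut. -/
def HasK2Cut (G : SimpleGraph V) : Prop :=
  ∃ u v : V, G.Adj u v ∧ IsVertexCut G {u, v}

/-- `G` has a `P3`-cut. -/
def HasP3Cut (G : SimpleGraph V) : Prop :=
  ∃ u v w : V, u ≠ w ∧ G.Adj u v ∧ G.Adj v w ∧ ¬ G.Adj u w ∧ IsVertexCut G {u, v, w}

/-- `G` has a 2-edge-cut: two edges whose removal disconnects the graph. -/
def Has2EdgeCut (G : SimpleGraph V) : Prop :=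
  ∃ e f : Sym2 V, e ≠ f ∧ e ∈ G.edgeSet ∧ f ∈ G.edgeSet ∧
    ¬ (G.deleteEdges {e, f}).Preconnected

/-- `Q1`, `Q2` are the two internally disjoint `(x,y)`-paths of the cycle `w`. -/
def ArcsOf (G : SimpleGraph V) {v x y : V} (w : G.Walk v v) (Q1 Q2 : G.Walk x y) : Prop :=
  x ∈ w.support ∧ y ∈ w.support ∧ x ≠ y ∧ Q1.IsPath ∧ Q2.IsPath ∧
    ({a | a ∈ Q1.support} ∩ {a | a ∈ Q2.support} = {x, y}) ∧
    ({e | e ∈ w.edges} = {e | e ∈ Q1.edges} ∪ {e | e ∈ Q2.edges})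

/-- `P` is a chordal path of the hole `w`: `w ∪ P` is an induced theta-subgraph of `G`. -/
def IsChordalPath (G : SimpleGraph V) {v x y : V} (w : G.Walk v v) (P : G.Walk x y) : Prop :=
  IsHole G w ∧ P.IsPath ∧ 2 ≤ P.length ∧ x ∈ w.support ∧ y ∈ w.support ∧ x ≠ y ∧
    (∀ a ∈ wInterior P, a ∉ w.support) ∧
    (∀ a, (a ∈ w.support ∨ a ∈ P.support) → ∀ b, (b ∈ w.support ∨ b ∈ P.support) →
      G.Adj a b → (s(a, b) ∈ w.edges ∨ s(a, b) ∈ P.edges))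

/-- `P` is an `(s,t)`-jump over the hole `w`. -/
def IsJump (G : SimpleGraph V) {v s t : V} (w : G.Walk v v) (P : G.Walk s t) : Prop :=
  IsHole G w ∧ s ∈ w.support ∧ t ∈ w.support ∧ s ≠ t ∧ ¬ G.Adj s t ∧
    IsInducedPath G P ∧ ∀ a ∈ wInterior P, a ∉ w.support

/-- `P` is a local jump over `w` across the interior of the arc `Q1`
(`Q1`, `Q2` being the two arcs of `w` between the ends of `P`). -/
def IsLocalJumpAcross (G : SimpleGraph V) {v s t : V} (w : G.Walk v v)
    (P Q1 Q2 : G.Walk s t) : Prop :=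
  IsJump G w P ∧ ArcsOf G w Q1 Q2 ∧
    (∃ a ∈ wInterior Q1, ∃ b ∈ wInterior P, G.Adj a b) ∧
    (∀ a ∈ wInterior Q2, ∀ b ∈ wInterior P, ¬ G.Adj a b)

/-- `P` is a local jump over `w`. -/
def IsLocalJump (G : SimpleGraph V) {v s t : V} (w : G.Walk v v) (P : G.Walk s t) : Prop :=
  ∃ Q1 Q2 : G.Walk s t, IsLocalJumpAcross G w P Q1 Q2

/-- `P` is a local jump over `w` across one vertex. -/
def IsLocalJumpAcrossOne (G : SimpleGraph V) {v s t : V} (w : G.Walk v v)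
    (P : G.Walk s t) : Prop :=
  ∃ Q1 Q2 : G.Walk s t, IsLocalJumpAcross G w P Q1 Q2 ∧ Q1.length = 2

/-- `P` is a short jump over `w`: no internal vertex of either arc of `w`
has a neighbour among the internal vertices of `P`. -/
def IsShortJump (G : SimpleGraph V) {v s t : V} (w : G.Walk v v) (P : G.Walk s t) : Prop :=
  IsJump G w P ∧
    ∀ a ∈ w.support, a ≠ s → a ≠ t → ∀ b ∈ wInterior P, ¬ G.Adj a b

/-- `P` is a short jump over `w` across the interior of `Q1`, i.e. `P ∪ Q1` is an
odd hole (a jump hole over `w`). -/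
def IsShortJumpAcross (G : SimpleGraph V) {v s t : V} (w : G.Walk v v)
    (P Q1 Q2 : G.Walk s t) : Prop :=
  IsShortJump G w P ∧ ArcsOf G w Q1 Q2 ∧ IsOddHole G (P.append Q1.reverse)

/-- `x` lies in some jump hole over `w`. -/
def InJumpHoleOver (G : SimpleGraph V) {v : V} (w : G.Walk v v) (x : V) : Prop :=
  ∃ (s t : V) (P Q1 Q2 : G.Walk s t),
    IsShortJumpAcross G w P Q1 Q2 ∧ (x ∈ P.support ∨ x ∈ Q1.support)

/-- `a`, `b`, `c`, `d` appear on the cycle `w` in this cyclic order. -/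
def CyclicOrder4 (G : SimpleGraph V) {v : V} (w : G.Walk v v) (a b c d : V) : Prop :=
  ∃ n : ℕ, List.Sublist [a, b, c, d] (w.support.tail.rotate n)

/-- A `K4`-subdivision in `G`: four distinct branch vertices joined by six
internally disjoint paths (the arrises). -/
structure K4Sub (G : SimpleGraph V) where
  u1 : V
  u2 : V
  u3 : V
  u4 : V
  P1 : G.Walk u1 u2
  P2 : G.Walk u3 u4
  Q1 : G.Walk u2 u3
  Q2 : G.Walk u1 u4
  L1 : G.Walk u1 u3
  L2 : G.Walk u2 u4
  hu : List.Nodup [u1, u2, u3, u4]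
  hP1 : P1.IsPath
  hP2 : P2.IsPath
  hQ1 : Q1.IsPath
  hQ2 : Q2.IsPath
  hL1 : L1.IsPath
  hL2 : L2.IsPath
  hP : ∀ a ∈ P1.support, a ∉ P2.support
  hQ : ∀ a ∈ Q1.support, a ∉ Q2.support
  hL : ∀ a ∈ L1.support, a ∉ L2.support

namespace K4Sub

variable {G : SimpleGraph V}

/-- The face cycle `C1 = P1 ∪ Q1 ∪ L1`. -/
def C1 (H : K4Sub G) : G.Walk H.u1 H.u1 := (H.P1.append H.Q1).append H.L1.reverse
/-- The face cycle `C2 = P1 ∪ Q2 ∪ L2`. -/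
def C2 (H : K4Sub G) : G.Walk H.u1 H.u1 := (H.P1.append H.L2).append H.Q2.reverse
/-- The face cycle `C3 = P2 ∪ Q1 ∪ L2`. -/
def C3 (H : K4Sub G) : G.Walk H.u2 H.u2 := (H.Q1.append H.P2).append H.L2.reverse
/-- The face cycle `C4 = C1 △ C2 △ C3 = P2 ∪ Q2 ∪ L1`. -/
def C4 (H : K4Sub G) : G.Walk H.u1 H.u1 := (H.L1.append H.P2).append H.Q2.reverse

/-- The vertex set of the subdivision. -/
def verts (H : K4Sub G) : Set V :=
  {a | a ∈ H.P1.support ∨ a ∈ H.P2.support ∨ a ∈ H.Q1.support ∨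
       a ∈ H.Q2.support ∨ a ∈ H.L1.support ∨ a ∈ H.L2.support}

/-- The edge set of the subdivision. -/
def edges (H : K4Sub G) : Set (Sym2 V) :=
  {e | e ∈ H.P1.edges ∨ e ∈ H.P2.edges ∨ e ∈ H.Q1.edges ∨
       e ∈ H.Q2.edges ∨ e ∈ H.L1.edges ∨ e ∈ H.L2.edges}

end K4Sub

/-- `H` is an odd `K4`-subdivision: all four face cycles are odd holes. -/
def IsOddK4 (G : SimpleGraph V) (H : K4Sub G) : Prop :=
  IsOddHole G H.C1 ∧ IsOddHole G H.C2 ∧ IsOddHole G H.C3 ∧ IsOddHole G H.C4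

/-- `G` has an odd `K4`-subdivision. -/
def HasOddK4 (G : SimpleGraph V) : Prop := ∃ H : K4Sub G, IsOddK4 G H

/-- `H` is a balanced `K4`-subdivision of type `(1,2)`. -/
def IsBalancedK4 (G : SimpleGraph V) (H : K4Sub G) : Prop :=
  IsOddHole G H.C1 ∧ IsOddHole G H.C2 ∧
    IsHole G H.C3 ∧ Even H.C3.length ∧ IsHole G H.C4 ∧ Even H.C4.length ∧
    H.Q1.length = 1 ∧ 2 ≤ H.L2.length

/-- `G` contains a balanced `K4`-subdivision of type `(1,2)`. -/
def HasBalancedK4 (G : SimpleGraph V) : Prop := ∃ H : K4Sub G, IsBalancedK4 G H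

/-- `P` is a direct connection linking the (vertex sets of) two disjoint induced
subgraphs `S1` and `S2`. -/
def IsDirectConnection (G : SimpleGraph V) (S1 S2 : Set V) {v1 v2 : V}
    (P : G.Walk v1 v2) : Prop :=
  IsInducedPath G P ∧ (∀ x ∈ P.support, x ∉ S1 ∧ x ∉ S2) ∧
    (∃ y ∈ S1, G.Adj v1 y) ∧ (∃ y ∈ S2, G.Adj v2 y) ∧
    (∀ x ∈ P.support, (∃ y ∈ S1, G.Adj x y) → x = v1) ∧
    (∀ x ∈ P.support, (∃ y ∈ S2, G.Adj x y) → x = v2)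

/-- `P` is a minimal direct connection linking `S1` and `S2`. -/
def IsMinimalDirectConnection (G : SimpleGraph V) (S1 S2 : Set V) {v1 v2 : V}
    (P : G.Walk v1 v2) : Prop :=
  IsDirectConnection G S1 S2 P ∧
    ∀ (w1 w2 : V) (P' : G.Walk w1 w2), IsDirectConnection G S1 S2 P' →
      (∀ x ∈ P'.support, x ∈ P.support) → ∀ x ∈ P.support, x ∈ P'.support

/-! Write `C = Q₁ ∪ Q₂`. Girth `2l+1` and the absence of longer odd holes force `|C| = 2l+1`.
Since `Q₂*` sees nothing of `P*`, `P ∪ Q₂` is a hole. Were it odd, it would also have length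
`2l+1`, so `|P| = |Q₁|`. For a short jump this contradicts the oddness of the hole `P ∪ Q₁`. For
a local jump, an edge `ab` with `a ∈ Q₁*`, `b ∈ P*` splits `P ∪ Q₁ + ab` into two cycles, each of
length at least `2l+1`, whence `2|Q₁| + 2 ≥ 4l+2` and `|Q₂| ≤ 1`, which is absurd. -/

def InternallyDisjoint {G : SimpleGraph V} {u v : V} (p q : G.Walk u v) : Prop :=
  ∀ c ∈ p.support, c ∈ q.support → c = u ∨ c = v

namespace InternallyDisjoint

variable {G : SimpleGraph V} {u v : V} {p q : G.Walk u v}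

lemma reverse (h : InternallyDisjoint p q) : InternallyDisjoint p.reverse q.reverse := by
  intro c hp hq
  rw [Walk.support_reverse, List.mem_reverse] at hp hq
  exact (h c hp hq).symm

lemma disjoint_support_tail (hp : p.IsPath) (hq : q.IsPath) (h : InternallyDisjoint p q) :
    p.support.tail.Disjoint q.reverse.support.tail := by
  intro c hcp hcq
  have hp' := p.cons_tail_support ▸ hp.support_nodup
  have hq' := q.reverse.cons_tail_support ▸ hq.reverse.support_nodup
  have hcq' : c ∈ q.support := by
    simpa using List.mem_of_mem_tail hcq
  rcases h c (List.mem_of_mem_tail hcp) hcq' with rfl | rfl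
  · exact (List.nodup_cons.mp hp').1 hcp
  · exact (List.nodup_cons.mp hq').1 hcq

end InternallyDisjoint

namespace SimpleGraph.Walk

variable {G : SimpleGraph V} {u v : V}

lemma two_le_length_of_not_adj (p : G.Walk u v) (huv : u ≠ v) (hadj : ¬ G.Adj u v) :
    2 ≤ p.length := by
  have h0 : p.length ≠ 0 := fun h ↦ huv (eq_of_length_eq_zero h)
  have h1 : p.length ≠ 1 := fun h ↦ hadj (adj_of_length_eq_one h)
  omega

lemma IsPath.isCycle_append_reverse {p q : G.Walk u v} (hp : p.IsPath) (hq : q.IsPath)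
    (hpq : InternallyDisjoint p q) (hlen : 1 < q.length) : (p.append q.reverse).IsCycle :=
  hp.isCycle_append hq.reverse (hpq.disjoint_support_tail hp hq) (Or.inr (by simpa))

end SimpleGraph.Walk

open SimpleGraph.Walk

namespace ArcsOf

variable {G : SimpleGraph V} {v x y : V} {w : G.Walk v v} {Q1 Q2 : G.Walk x y}

lemma symm (h : ArcsOf G w Q1 Q2) : ArcsOf G w Q2 Q1 := by
  obtain ⟨hx, hy, hxy, h1, h2, hsupp, hedges⟩ := h
  exact ⟨hx, hy, hxy, h2, h1, Set.inter_comm _ _ ▸ hsupp, Set.union_comm _ _ ▸ hedges⟩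

lemma internallyDisjoint (h : ArcsOf G w Q1 Q2) : InternallyDisjoint Q1 Q2 := by
  obtain ⟨-, -, -, -, -, hsupp, -⟩ := h
  intro c h1 h2
  have hc : c ∈ ({x, y} : Set V) := hsupp ▸ ⟨h1, h2⟩
  simpa using hc

lemma support_subset (h : ArcsOf G w Q1 Q2) {c : V} (hc : c ∈ Q1.support) : c ∈ w.support := by
  obtain ⟨-, hy, -, -, -, -, hedges⟩ := h
  rcases mem_support_iff_exists_mem_edges.mp hc with rfl | ⟨e, he, hce⟩
  · exact hy
  · have he' : e ∈ {e | e ∈ w.edges} := hedges ▸ Or.inl he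
    exact mem_support_of_mem_edges he' hce

lemma length_eq (h : ArcsOf G w Q1 Q2) (hw : w.IsCycle) (hxy : ¬ G.Adj x y) :
    w.length = Q1.length + Q2.length := by
  have hint := h.internallyDisjoint
  obtain ⟨-, -, hne, h1, h2, -, hedges⟩ := h
  have hdisj : Q1.edges.Disjoint Q2.edges := by
    have := h1.disjoint_edges_of_disjoint_support (hint.disjoint_support_tail h1 h2)
      (by have := Q1.two_le_length_of_not_adj hne hxy; omega)
    simpa using this
  have hperm : w.edges.Perm (Q1.edges ++ Q2.edges) := by
    refine (List.perm_ext_iff_of_nodup hw.edges_nodup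
      (List.nodup_append'.mpr ⟨h1.isTrail.edges_nodup, h2.isTrail.edges_nodup, hdisj⟩)).mpr ?_
    intro e
    simpa using congrArg (e ∈ ·) hedges
  simpa using hperm.length_eq

lemma isInducedPath (h : ArcsOf G w Q1 Q2) (hw : IsHole G w) (hxy : ¬ G.Adj x y) :
    IsInducedPath G Q1 := by
  have hint := h.internallyDisjoint
  have hsub := @h.support_subset
  obtain ⟨-, -, -, hQ1, -, -, hedges⟩ := h
  refine ⟨hQ1, fun a ha b hb hab ↦ ?_⟩
  have hab' : s(a, b) ∈ {e | e ∈ w.edges} := hw.2.2 a (hsub ha) b (hsub hb) hab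
  rw [hedges] at hab'
  refine hab'.resolve_right fun h2 ↦ ?_
  rcases hint a ha (Q2.fst_mem_support_of_mem_edges h2) with rfl | rfl <;>
    rcases hint b hb (Q2.snd_mem_support_of_mem_edges h2) with rfl | rfl
  all_goals first | exact hab.ne rfl | exact hxy hab | exact hxy hab.symm

end ArcsOf

section Holes

variable {G : SimpleGraph V} {u v : V}

lemma IsInducedPath.isHole_append_reverse {p q : G.Walk u v} (hp : IsInducedPath G p)
    (hq : IsInducedPath G q) (huv : u ≠ v) (hadj : ¬ G.Adj u v) (hpq : InternallyDisjoint p q)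
    (hcross : ∀ a ∈ wInterior p, ∀ b ∈ wInterior q, ¬ G.Adj a b) :
    IsHole G (p.append q.reverse) := by
  have hmixed : ∀ a ∈ p.support, ∀ b ∈ q.support, G.Adj a b →
      s(a, b) ∈ p.edges ∨ s(a, b) ∈ q.edges := by
    intro a ha b hb hab
    by_cases haq : a ∈ q.support
    · exact Or.inr (hq.2 a haq b hb hab)
    by_cases hbp : b ∈ p.support
    · exact Or.inl (hp.2 a ha b hbp hab)
    refine (hcross a ⟨ha, ?_, ?_⟩ b ⟨hb, ?_, ?_⟩ hab).elim
    · rintro rfl; exact haq q.start_mem_support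
    · rintro rfl; exact haq q.end_mem_support
    · rintro rfl; exact hbp p.start_mem_support
    · rintro rfl; exact hbp p.end_mem_support
  refine ⟨hp.1.isCycle_append_reverse hq.1 hpq ?_, ?_, fun a ha b hb hab ↦ ?_⟩
  · have := q.two_le_length_of_not_adj huv hadj; omega
  · have := p.two_le_length_of_not_adj huv hadj
    have := q.two_le_length_of_not_adj huv hadj
    simp only [length_append, length_reverse]; omega
  simp only [mem_support_append_iff, support_reverse, List.mem_reverse] at ha hb
  simp only [edges_append, edges_reverse, List.mem_append, List.mem_reverse]
  rcases ha with ha | ha <;> rcases hb with hb | hb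
  · exact Or.inl (hp.2 a ha b hb hab)
  · exact hmixed a ha b hb hab
  · rw [Sym2.eq_swap]; exact hmixed b hb a ha hab.symm
  · exact Or.inr (hq.2 a ha b hb hab)

end Holes

section Girth

variable {G : SimpleGraph V} {u v a b : V}

lemma girth_le_length_add_length_add_one {p₁ : G.Walk u a} {p₂ : G.Walk a v}
    {q₁ : G.Walk u b} {q₂ : G.Walk b v} (hp : (p₁.append p₂).IsPath) (hq : (q₁.append q₂).IsPath)
    (hpq : InternallyDisjoint (p₁.append p₂) (q₁.append q₂))
    (hau : a ≠ u) (hav : a ≠ v) (hbu : b ≠ u) (hab : G.Adj a b) :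
    G.girth ≤ p₁.length + q₁.length + 1 := by
  have hap : a ∈ (p₁.append p₂).support := support_subset_support_append_left _ _ p₁.end_mem_support
  have haq : a ∉ q₁.support := fun ha ↦ by
    rcases hpq a hap (support_subset_support_append_left _ _ ha) with h | h
    exacts [hau h, hav h]
  have hq₁ : (q₁.concat hab.symm).IsPath := hq.of_append_left.concat haq hab.symm
  have hdisj : InternallyDisjoint p₁ (q₁.concat hab.symm) := by
    intro c hc₁ hc₂
    rw [support_concat, List.mem_append, List.mem_singleton] at hc₂
    refine hc₂.elim (fun hc₂ ↦ ?_) .inr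
    refine (hpq c (support_subset_support_append_left _ _ hc₁)
      (support_subset_support_append_left _ _ hc₂)).imp_right fun hcv ↦ ?_
    exact (hp.ne_of_mem_support_of_append (hav ·.symm) hc₁ p₂.end_mem_support hcv).elim
  have hlen : q₁.length ≠ 0 := fun h ↦ hbu (eq_of_length_eq_zero h).symm
  have hcyc := hp.of_append_left.isCycle_append_reverse hq₁ hdisj (by rw [length_concat]; omega)
  simpa [add_assoc] using girth_le_length hcyc

lemma two_mul_girth_le_of_adj {p q : G.Walk u v} (hp : p.IsPath) (hq : q.IsPath)
    (hpq : InternallyDisjoint p q) (ha : a ∈ wInterior p) (hb : b ∈ wInterior q)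
    (hab : G.Adj a b) : 2 * G.girth ≤ p.length + q.length + 2 := by
  classical
  obtain ⟨hap, hau, hav⟩ := ha
  obtain ⟨hbq, hbu, hbv⟩ := hb
  have hp_split := p.take_spec hap
  have hq_split := q.take_spec hbq
  have hstart := girth_le_length_add_length_add_one (p₂ := p.dropUntil a hap)
    (q₂ := q.dropUntil b hbq) (by rwa [hp_split]) (by rwa [hq_split]) (by rwa [hp_split, hq_split])
    hau hav hbu hab
  have hend := girth_le_length_add_length_add_one (p₂ := (p.takeUntil a hap).reverse)
    (q₂ := (q.takeUntil b hbq).reverse)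
    (by rw [← reverse_append, hp_split]; exact hp.reverse)
    (by rw [← reverse_append, hq_split]; exact hq.reverse)
    (by rw [← reverse_append, ← reverse_append, hp_split, hq_split]; exact hpq.reverse)
    hav hau hbv hab
  have hp_len := congrArg length hp_split
  have hq_len := congrArg length hq_split
  simp only [length_append, length_reverse] at hend hp_len hq_len
  omega

end Girth

lemma MemGFam.length_eq_of_isOddHole {G : SimpleGraph V} {l : ℕ} (hG : MemGFam G l) {v : V}
    {w : G.Walk v v} (hw : IsOddHole G w) : w.length = 2 * l + 1 := by
  have hlow := hG.1 ▸ girth_le_length hw.1.1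
  have hup := hG.2 v w hw
  obtain ⟨k, hk⟩ := hw.2
  omega

section Jumps

variable {G : SimpleGraph V} {v s t : V} {w : G.Walk v v} {P Q1 Q2 : G.Walk s t}

lemma IsJump.internallyDisjoint (hP : IsJump G w P) (hA : ArcsOf G w Q1 Q2) :
    InternallyDisjoint P Q1 := by
  intro c hcP hcQ
  by_contra! hc
  exact hP.2.2.2.2.2.2 c ⟨hcP, hc⟩ (hA.support_subset hcQ)

lemma IsJump.isHole_append_reverse (hP : IsJump G w P) (hA : ArcsOf G w Q1 Q2)
    (hcross : ∀ a ∈ wInterior P, ∀ b ∈ wInterior Q1, ¬ G.Adj a b) :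
    IsHole G (P.append Q1.reverse) := by
  have hPQ := hP.internallyDisjoint hA
  obtain ⟨hw, -, -, hst, hnadj, hP, -⟩ := hP
  exact hP.isHole_append_reverse (hA.isInducedPath hw hnadj) hst hnadj hPQ hcross

end Jumps

theorem jump_parity_general {V : Type*}
    (l : ℕ) (G : SimpleGraph V) (hG : MemGFam G l)
    {v s t : V} (w : G.Walk v v) (hw : IsOddHole G w)
    (P Q1 Q2 : G.Walk s t)
    (h : IsLocalJumpAcross G w P Q1 Q2 ∨ IsShortJumpAcross G w P Q1 Q2) :
    P.length % 2 = Q2.length % 2 ∧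
    (IsHole G (P.append Q2.reverse) ∧ Even (P.append Q2.reverse).length) ∧
    ((P.append Q1.reverse).IsCycle ∧ Odd (P.append Q1.reverse).length) := by
  obtain ⟨hJ, hA, hcross⟩ : IsJump G w P ∧ ArcsOf G w Q1 Q2 ∧
      ∀ a ∈ wInterior P, ∀ b ∈ wInterior Q2, ¬ G.Adj a b := by
    rcases h with ⟨hJ, hA, -, hloc⟩ | ⟨⟨hJ, hshort⟩, hA, -⟩
    · exact ⟨hJ, hA, fun a ha b hb hab ↦ hloc b hb a ha hab.symm⟩
    · exact ⟨hJ, hA, fun a ha b ⟨hb, hbs, hbt⟩ hab ↦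
        hshort b (hA.symm.support_subset hb) hbs hbt a ha hab.symm⟩
  have hH := hJ.isHole_append_reverse hA.symm hcross
  have hPQ1 := hJ.internallyDisjoint hA
  obtain ⟨hwh, -, -, hst, hnadj, hP, -⟩ := hJ
  have hQ1 : Q1.IsPath := hA.2.2.2.1
  have hw_len := hG.length_eq_of_isOddHole hw
  have hw_sum := hA.length_eq hwh.1 hnadj
  have hQ1_len := Q1.two_le_length_of_not_adj hst hnadj
  have hQ2_len := Q2.two_le_length_of_not_adj hst hnadj
  have hpar : P.length % 2 = Q2.length % 2 := by
    by_contra hne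
    have hH_len := hG.length_eq_of_isOddHole
      ⟨hH, by rw [Nat.odd_iff, length_append, length_reverse]; omega⟩
    rw [length_append, length_reverse] at hH_len
    rcases h with ⟨-, -, ⟨a, ha, b, hb, hab⟩, -⟩ | ⟨-, -, hJH⟩
    · have := hG.1 ▸ two_mul_girth_le_of_adj hP.1 hQ1 hPQ1 hb ha hab.symm
      omega
    · have := Nat.odd_iff.mp hJH.2
      rw [length_append, length_reverse] at this
      omega
  refine ⟨hpar, ⟨hH, ?_⟩, hP.1.isCycle_append_reverse hQ1 hPQ1 (by omega), ?_⟩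
  · rw [Nat.even_iff, length_append, length_reverse]; omega
  · rw [Nat.odd_iff, length_append, length_reverse]; omega

/-- If `P` is a local or short jump over the odd hole `w` across the
interior of the arc `Q1`, then `|P|` and `|Q2|` have the same parity; consequently
`P ∪ Q2` is an even hole and `P ∪ Q1` is an odd cycle. -/
theorem jump_parity {V : Type*} [Fintype V]
    (l : ℕ) (hl : 4 ≤ l) (G : SimpleGraph V) (hG : MemGFam G l)
    {v s t : V} (w : G.Walk v v) (hw : IsOddHole G w)
    (P Q1 Q2 : G.Walk s t)
    (h : IsLocalJumpAcross G w P Q1 Q2 ∨ IsShortJumpAcross G w P Q1 Q2) :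
    P.length % 2 = Q2.length % 2 ∧
    (IsHole G (P.append Q2.reverse) ∧ Even (P.append Q2.reverse).length) ∧
    ((P.append Q1.reverse).IsCycle ∧ Odd (P.append Q1.reverse).length) :=
  jump_parity_general l G hG w hw P Q1 Q2 h
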